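/- arXiv:1803.09796 — 9 statements merged into one kernel-verified Lean document; each statement's English description precedes it below -/
import Mathlib

section
/- Let f ∈ L¹(0,1] be nonnegative non-increasing with f** ≤ K·f pointwise for some constant K > 1, where f**(t) = (1/t)∫₀ᵗ f dλ. Then there exists a constant C > 0 and δ = 1 - 1/K ∈ (0,1) such that f**(t) ≤ C·t^{-δ} for all t ∈ (0,1]. In fact one can take C = ∫₀¹ f dλ. -/
/-!
Write `F t = ∫₀ᵗ f`. For `0 < s ≤ t ≤ 1`, monotonicity gives `F t - F s ≥ (t - s) f t`, and the
hypothesis `F t ≤ K t f t` turns this into `F s ≤ (1 - (t - s) / (K t)) F t`. Along the geometric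
grid `t = r ^ k` with `r = t₀ ^ (1 / n)` the factor is always `1 + (r - 1) / K`, so
`F t₀ ≤ (1 + (t₀ ^ (1 / n) - 1) / K) ^ n F 1`, and the right-hand side tends to `t₀ ^ (1 / K) F 1`
since `n (t₀ ^ (1 / n) - 1) → log t₀`.
-/

open MeasureTheory Set Filter Topology

theorem AntitoneOn.mul_le_setIntegral_Ioc {f : ℝ → ℝ} {a b : ℝ} (hf : AntitoneOn f (Ioc a b))
    (hfi : IntegrableOn f (Ioc a b)) (hab : a ≤ b) :
    (b - a) * f b ≤ ∫ x in Ioc a b, f x :=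
  calc (b - a) * f b = ∫ _ in Ioc a b, f b := by
        rw [setIntegral_const, Real.volume_real_Ioc_of_le hab, smul_eq_mul]
    _ ≤ ∫ x in Ioc a b, f x :=
        setIntegral_mono_on (integrableOn_const measure_Ioc_lt_top.ne) hfi measurableSet_Ioc
          fun _ hx => hf hx ⟨hx.1.trans_le hx.2, le_rfl⟩ hx.2

theorem setIntegral_Ioc_zero_le_one_sub_mul {f : ℝ → ℝ} {K s t : ℝ} (hK : 0 < K) (hs : 0 < s)
    (hst : s ≤ t) (hf : AntitoneOn f (Ioc 0 t)) (hfi : IntegrableOn f (Ioc 0 t))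
    (ht : (1 / t) * ∫ x in Ioc 0 t, f x ≤ K * f t) :
    ∫ x in Ioc 0 s, f x ≤ (1 - (t - s) / (K * t)) * ∫ x in Ioc 0 t, f x := by
  have ht0 : 0 < t := hs.trans_le hst
  have hsplit : ∫ x in Ioc 0 t, f x = (∫ x in Ioc 0 s, f x) + ∫ x in Ioc s t, f x := by
    rw [← Ioc_union_Ioc_eq_Ioc hs.le hst, setIntegral_union (Ioc_disjoint_Ioc_of_le le_rfl)
      measurableSet_Ioc (hfi.mono_set (Ioc_subset_Ioc_right hst))
      (hfi.mono_set (Ioc_subset_Ioc_left hs.le))]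
  have htail : (t - s) * f t ≤ ∫ x in Ioc s t, f x :=
    (hf.mono (Ioc_subset_Ioc_left hs.le)).mul_le_setIntegral_Ioc
      (hfi.mono_set (Ioc_subset_Ioc_left hs.le)) hst
  have hmean : (∫ x in Ioc 0 t, f x) / (K * t) ≤ f t := by
    rw [div_le_iff₀ (by positivity)]
    rw [one_div, inv_mul_le_iff₀ ht0] at ht
    linarith
  have hmean_tail := mul_le_mul_of_nonneg_left hmean (sub_nonneg.2 hst)
  have hrhs : (1 - (t - s) / (K * t)) * ∫ x in Ioc 0 t, f x
      = (∫ x in Ioc 0 t, f x) - (t - s) * ((∫ x in Ioc 0 t, f x) / (K * t)) := by ring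
  linarith

theorem setIntegral_Ioc_zero_pow_le {f : ℝ → ℝ} {K r : ℝ} (hK : 1 ≤ K) (hr0 : 0 < r)
    (hr1 : r ≤ 1) (hf : AntitoneOn f (Ioc 0 1)) (hfi : IntegrableOn f (Ioc 0 1))
    (hreg : ∀ t ∈ Ioc (0 : ℝ) 1, (1 / t) * ∫ x in Ioc 0 t, f x ≤ K * f t) (k : ℕ) :
    ∫ x in Ioc 0 (r ^ k), f x ≤ (1 + (r - 1) / K) ^ k * ∫ x in Ioc 0 1, f x := by
  induction k with
  | zero => simp
  | succ k ih =>
    have hrk : 0 < r ^ k := pow_pos hr0 k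
    have hrk1 : r ^ k ≤ 1 := pow_le_one₀ hr0.le hr1
    have hsub : Ioc 0 (r ^ k) ⊆ Ioc 0 1 := Ioc_subset_Ioc_right hrk1
    have hstep := setIntegral_Ioc_zero_le_one_sub_mul (by linarith) (pow_pos hr0 (k + 1))
      (pow_le_pow_of_le_one hr0.le hr1 k.le_succ) (hf.mono hsub) (hfi.mono_set hsub)
      (hreg _ ⟨hrk, hrk1⟩)
    have hfactor : 1 - (r ^ k - r ^ (k + 1)) / (K * r ^ k) = 1 + (r - 1) / K := by
      field_simp
      ring
    have hfactor_nonneg : 0 ≤ 1 + (r - 1) / K := by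
      have : -1 ≤ (r - 1) / K := by
        rw [le_div_iff₀ (by linarith)]
        linarith
      linarith
    rw [hfactor] at hstep
    calc _ ≤ (1 + (r - 1) / K) * ∫ x in Ioc 0 (r ^ k), f x := hstep
      _ ≤ (1 + (r - 1) / K) * ((1 + (r - 1) / K) ^ k * ∫ x in Ioc 0 1, f x) :=
          mul_le_mul_of_nonneg_left ih hfactor_nonneg
      _ = _ := by ring

theorem tendsto_nat_mul_rpow_inv_sub_one {a : ℝ} (ha : 0 < a) :
    Tendsto (fun n : ℕ => n * (a ^ (n : ℝ)⁻¹ - 1)) atTop (𝓝 (Real.log a)) := by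
  have hslope := (Real.hasStrictDerivAt_const_rpow ha 0).hasDerivAt.tendsto_slope_zero_right
  rw [Real.rpow_zero, one_mul] at hslope
  refine (hslope.comp (tendsto_inv_atTop_nhdsGT_zero.comp tendsto_natCast_atTop_atTop)).congr
    fun n => ?_
  simp

theorem setIntegral_Ioc_zero_le_rpow_mul {f : ℝ → ℝ} {K t : ℝ} (hK : 1 ≤ K) (ht : t ∈ Ioc (0 : ℝ) 1)
    (hf : AntitoneOn f (Ioc 0 1)) (hfi : IntegrableOn f (Ioc 0 1))
    (hreg : ∀ t ∈ Ioc (0 : ℝ) 1, (1 / t) * ∫ x in Ioc 0 t, f x ≤ K * f t) :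
    ∫ x in Ioc 0 t, f x ≤ t ^ (1 / K) * ∫ x in Ioc 0 1, f x := by
  have hlim : Tendsto (fun n : ℕ => (1 + (t ^ (n : ℝ)⁻¹ - 1) / K) ^ n) atTop (𝓝 (t ^ (1 / K))) := by
    rw [Real.rpow_def_of_pos ht.1, ← div_eq_mul_one_div]
    refine Real.tendsto_one_add_pow_exp_of_tendsto
      (((tendsto_nat_mul_rpow_inv_sub_one ht.1).div_const K).congr fun n => ?_)
    rw [mul_div_assoc]
  refine ge_of_tendsto (hlim.mul_const _) ?_
  filter_upwards [eventually_ne_atTop 0] with n hn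
  have hroot := setIntegral_Ioc_zero_pow_le hK (Real.rpow_pos_of_pos ht.1 (n : ℝ)⁻¹)
    (Real.rpow_le_one ht.1.le ht.2 (by positivity)) hf hfi hreg n
  rwa [Real.rpow_inv_natCast_pow ht.1.le hn] at hroot

theorem stmt_4_general (f : ℝ → ℝ) (K : ℝ)
    (hf_anti : AntitoneOn f (Ioc (0:ℝ) 1))
    (hf_int : IntegrableOn f (Ioc (0:ℝ) 1) volume)
    (hK : 1 < K)
    (hreg : ∀ t ∈ Ioc (0:ℝ) 1, (1 / t) * ∫ s in Ioc (0:ℝ) t, f s ≤ K * f t) :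
    (0 < 1 - 1 / K ∧ 1 - 1 / K < 1) ∧
      ∀ t ∈ Ioc (0:ℝ) 1,
        (1 / t) * ∫ s in Ioc (0:ℝ) t, f s ≤
          (∫ s in Ioc (0:ℝ) 1, f s) * t ^ (-(1 - 1 / K)) := by
  refine ⟨⟨sub_pos.2 ((div_lt_one (by linarith)).2 hK), sub_lt_self _ (by positivity)⟩,
    fun t ht => ?_⟩
  calc (1 / t) * ∫ s in Ioc 0 t, f s
      ≤ (1 / t) * (t ^ (1 / K) * ∫ s in Ioc 0 1, f s) :=
        mul_le_mul_of_nonneg_left (setIntegral_Ioc_zero_le_rpow_mul hK.le ht hf_anti hf_int hreg)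
          (one_div_pos.2 ht.1).le
    _ = (∫ s in Ioc 0 1, f s) * t ^ (-(1 - 1 / K)) := by
        rw [neg_sub, Real.rpow_sub ht.1, Real.rpow_one]
        ring

theorem stmt_4 (f : ℝ → ℝ) (K : ℝ)
    (hf_nonneg : ∀ t ∈ Ioc (0:ℝ) 1, 0 ≤ f t)
    (hf_anti : AntitoneOn f (Ioc (0:ℝ) 1))
    (hf_int : IntegrableOn f (Ioc (0:ℝ) 1) volume)
    (hK : 1 < K)
    (hreg : ∀ t ∈ Ioc (0:ℝ) 1, (1 / t) * ∫ s in Ioc (0:ℝ) t, f s ≤ K * f t) :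
    (0 < 1 - 1 / K ∧ 1 - 1 / K < 1) ∧
      ∀ t ∈ Ioc (0:ℝ) 1,
        (1 / t) * ∫ s in Ioc (0:ℝ) t, f s ≤
          (∫ s in Ioc (0:ℝ) 1, f s) * t ^ (-(1 - 1 / K)) :=
  stmt_4_general f K hf_anti hf_int hK hreg
end

section
/- Let g be a non-increasing integrable function on (0,1] such that g**(t) - g(t) ≤ C for all t ∈ (0,1] and some constant C > 0, where g**(t) = (1/t)∫₀ᵗ g dλ. Then there is a constant K > 0 such that g(t/2) - g(t) ≤ K for all t ∈ (0,1]. -/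
open MeasureTheory Set

theorem stmt_6 (g : ℝ → ℝ) (C : ℝ)
    (hg_anti : AntitoneOn g (Ioc (0:ℝ) 1))
    (hg_int : IntegrableOn g (Ioc (0:ℝ) 1) volume)
    (hC : 0 < C)
    (hbmo : ∀ t ∈ Ioc (0:ℝ) 1, (1 / t) * (∫ s in Ioc (0:ℝ) t, g s) - g t ≤ C) :
    ∃ K > (0:ℝ), ∀ t ∈ Ioc (0:ℝ) 1, g (t / 2) - g t ≤ K := by
  refine ⟨2 * C, by linarith, ?_⟩
  rintro t ⟨ht0, ht1⟩
  have ht2 : (0:ℝ) < t / 2 := by linarith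
  have hmem : t ∈ Ioc (0:ℝ) 1 := ⟨ht0, ht1⟩
  have hmem2 : t / 2 ∈ Ioc (0:ℝ) 1 := ⟨ht2, by linarith⟩
  have hsub1 : Ioc (0:ℝ) (t/2) ⊆ Ioc (0:ℝ) 1 := Ioc_subset_Ioc le_rfl (by linarith)
  have hsub2 : Ioc (t/2) t ⊆ Ioc (0:ℝ) 1 := Ioc_subset_Ioc (by linarith) ht1
  have int1 : IntegrableOn g (Ioc (0:ℝ) (t/2)) volume := hg_int.mono_set hsub1
  have int2 : IntegrableOn g (Ioc (t/2) t) volume := hg_int.mono_set hsub2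
  have hsplit : ∫ s in Ioc (0:ℝ) t, g s
      = (∫ s in Ioc (0:ℝ) (t/2), g s) + ∫ s in Ioc (t/2) t, g s := by
    rw [← setIntegral_union (Ioc_disjoint_Ioc_of_le le_rfl) measurableSet_Ioc int1 int2,
      Ioc_union_Ioc_eq_Ioc (by linarith) (by linarith)]
  have h1 : (t/2) * g (t/2) ≤ ∫ s in Ioc (0:ℝ) (t/2), g s := by
    have := setIntegral_mono_on (integrableOn_const (hs := by simp) (hC := by simp))
      int1 measurableSet_Ioc
      (fun s hs => hg_anti (hsub1 hs) hmem2 hs.2)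
    simpa [Real.volume_Ioc, ENNReal.toReal_ofReal ht2.le, max_eq_left ht2.le] using this
  have h2 : (t/2) * g t ≤ ∫ s in Ioc (t/2) t, g s := by
    have := setIntegral_mono_on (integrableOn_const (hs := by simp) (hC := by simp))
      int2 measurableSet_Ioc
      (fun s hs => hg_anti (hsub2 hs) hmem hs.2)
    simp only [setIntegral_const, smul_eq_mul, Real.volume_Ioc, Real.volume_real_Ioc_of_le (by linarith : t/2 ≤ t),
      ENNReal.toReal_ofReal (by linarith : (0:ℝ) ≤ t - t/2)] at this
    linarith
  have hb := hbmo t hmem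
  have hI : (∫ s in Ioc (0:ℝ) t, g s) ≤ (C + g t) * t := by
    rw [one_div, inv_mul_eq_div] at hb
    exact (div_le_iff₀ ht0).mp (by linarith)
  rw [hsplit] at hI
  nlinarith [h1, h2, hI]
end

section
/- Let g = Σ_{n≥1} β_n · 1_{D_n} where D_n = (2^{-n}, 2^{-n+1}] and the sequence (β_n) satisfies β_{n+1} ≤ Q̃ + β_n for all n ≥ 1 and some Q̃ > 0 (with g integrable). Then there is a constant C > 0 such that g**(t) ≤ g(t) + C for all t ∈ (0,1], where g**(t) = (1/t)∫₀ᵗ g dλ. In fact C = Q̃·Σ_{k≥1} k·2^{-k} works. -/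
open MeasureTheory Set

theorem stmt_7 (g : ℝ → ℝ) (β : ℕ → ℝ) (Q : ℝ) (hQ : 0 < Q)
    (hg_step : ∀ n : ℕ, 1 ≤ n →
      ∀ t ∈ Ioc ((2:ℝ) ^ (-(n:ℤ))) ((2:ℝ) ^ (-(n:ℤ) + 1)), g t = β n)
    (hβ : ∀ n : ℕ, 1 ≤ n → β (n + 1) ≤ Q + β n)
    (hg_int : IntegrableOn g (Ioc (0:ℝ) 1) volume) :
    ∃ C > (0:ℝ), C = Q * ∑' k : ℕ, (k : ℝ) * (2:ℝ) ^ (-(k:ℤ)) ∧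
      ∀ t ∈ Ioc (0:ℝ) 1, (1 / t) * ∫ s in Ioc (0:ℝ) t, g s ≤ g t + C := by
  have hz : ∀ m : ℕ, (2:ℝ) ^ (-(m:ℤ)) = (2⁻¹) ^ m := fun m => by
    rw [zpow_neg, ← inv_zpow, zpow_natCast]
  have hSsum : Summable (fun k : ℕ => (k : ℝ) * (2:ℝ) ^ (-(k:ℤ))) := by
    have := summable_pow_mul_geometric_of_norm_lt_one (R := ℝ) 1 (r := 2⁻¹) (by
      rw [Real.norm_eq_abs, abs_of_pos] <;> norm_num)
    simpa [hz, pow_one] using this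
  set S := ∑' k : ℕ, (k : ℝ) * (2:ℝ) ^ (-(k:ℤ)) with hSdef
  have hSpos : 0 < S :=
    Summable.tsum_pos hSsum (fun i => by positivity) 1 (by norm_num)
  refine ⟨Q * S, by positivity, rfl, ?_⟩
  rintro t ⟨ht0, ht1⟩
  -- locate t in a dyadic interval
  obtain ⟨m, hm⟩ := exists_mem_Ioc_zpow ht0 (by norm_num : (1:ℝ) < 2)
  have hm1 : m + 1 ≤ 0 := by
    by_contra h
    push_neg at h
    have h1 : (1:ℝ) ≤ 2 ^ m := one_le_zpow₀ (by norm_num) (by omega)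
    linarith [hm.1]
  set n : ℕ := (-m).toNat with hn
  have hmn : m = -(n:ℤ) := by
    rw [hn]; rw [Int.toNat_of_nonneg (by omega)]; ring
  have hn1 : 1 ≤ n := by omega
  have htl : (2:ℝ) ^ (-(n:ℤ)) < t := by rw [← hmn]; exact hm.1
  have htu : t ≤ (2:ℝ) ^ (-(n:ℤ) + 1) := by
    have : m + 1 = -(n:ℤ) + 1 := by omega
    rw [← this]; exact hm.2
  -- the dyadic decomposition of (0, t]
  set a : ℕ → ℝ := fun j => if j = 0 then t else 2 ^ (-(n:ℤ) - (j:ℤ) + 1) with ha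
  have ha0 : a 0 = t := rfl
  have haS : ∀ j : ℕ, a (j + 1) = 2 ^ (-(n:ℤ) - (j:ℤ)) := by
    intro j
    simp only [ha, if_neg (Nat.succ_ne_zero j)]
    congr 1
    push_cast
    ring
  have hapos : ∀ j, 0 < a j := by
    intro j
    cases j with
    | zero => exact ht0
    | succ k => rw [haS]; positivity
  have haanti : Antitone a := by
    apply antitone_nat_of_succ_le
    intro j
    cases j with
    | zero => rw [haS, ha0]; simpa using htl.le
    | succ k =>
      rw [haS, haS]
      exact zpow_le_zpow_right₀ (by norm_num) (by push_cast; omega)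
  set s : ℕ → Set ℝ := fun j => Ioc (a (j + 1)) (a j) with hs
  have hmeas : ∀ j, MeasurableSet (s j) := fun j => measurableSet_Ioc
  have hdisj : Pairwise (Function.onFun Disjoint s) := by
    intro i j hij
    simp only [hs, Function.onFun, Set.Ioc_disjoint_Ioc]
    rcases lt_or_gt_of_ne hij with h | h
    · exact le_trans inf_le_right (le_trans (haanti (by omega)) le_sup_left)
    · exact le_trans inf_le_left (le_trans (haanti (by omega)) le_sup_right)
  have hUnion : (⋃ j, s j) = Ioc (0:ℝ) t := by
    ext x
    simp only [mem_iUnion, hs, mem_Ioc]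
    constructor
    · rintro ⟨j, h1, h2⟩
      exact ⟨lt_trans (hapos (j+1)) h1, le_trans h2 (by simpa [ha0] using haanti (Nat.zero_le j))⟩
    · rintro ⟨hx0, hxt⟩
      by_cases hc : (2:ℝ) ^ (-(n:ℤ)) < x
      · exact ⟨0, by rw [haS]; simpa using hc, by rwa [ha0]⟩
      · push_neg at hc
        obtain ⟨p, hp⟩ := exists_mem_Ioc_zpow hx0 (by norm_num : (1:ℝ) < 2)
        have hpn : p ≤ -(n:ℤ) - 1 := by
          by_contra h
          push_neg at h
          have : (2:ℝ) ^ (-(n:ℤ)) ≤ 2 ^ p := zpow_le_zpow_right₀ (by norm_num) (by omega)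
          linarith [hp.1]
        set j : ℕ := (-(n:ℤ) - 1 - p).toNat with hj
        have hjp : p = -(n:ℤ) - (j:ℤ) - 1 := by omega
        refine ⟨j + 1, ?_, ?_⟩
        · rw [haS]
          have : -(n:ℤ) - (↑(j+1):ℤ) = p := by rw [hjp]; push_cast; ring
          rw [this]; exact hp.1
        · rw [haS]
          have : -(n:ℤ) - (j:ℤ) = p + 1 := by rw [hjp]; ring
          rw [this]; exact hp.2
  have hint : IntegrableOn g (⋃ j, s j) volume := by
    rw [hUnion]
    exact hg_int.mono_set (Ioc_subset_Ioc le_rfl ht1)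
  have hHasSum : HasSum (fun j => ∫ x in s j, g x) (∫ x in Ioc (0:ℝ) t, g x) := by
    rw [← hUnion]
    exact hasSum_integral_iUnion hmeas hdisj hint
  -- values of the pieces
  have hs0 : s 0 = Ioc ((2:ℝ) ^ (-(n:ℤ))) t := by
    show Ioc (a 1) (a 0) = _
    rw [haS, ha0]
    norm_num
  have hsS : ∀ j : ℕ, s (j + 1)
      = Ioc ((2:ℝ) ^ (-(n:ℤ) - (j:ℤ) - 1)) ((2:ℝ) ^ (-(n:ℤ) - (j:ℤ))) := by
    intro j
    show Ioc (a (j + 2)) (a (j + 1)) = _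
    rw [haS, haS]
    congr 2
    push_cast
    ring
  have hI0 : (∫ x in s 0, g x) = β n * (t - 2 ^ (-(n:ℤ))) := by
    have hsub : s 0 ⊆ Ioc ((2:ℝ) ^ (-(n:ℤ))) ((2:ℝ) ^ (-(n:ℤ) + 1)) := by
      rw [hs0]
      exact Ioc_subset_Ioc le_rfl htu
    rw [setIntegral_congr_fun (hmeas 0) (fun x hx => hg_step n hn1 x (hsub hx))]
    rw [setIntegral_const, hs0]
    rw [measureReal_def, Real.volume_Ioc, ENNReal.toReal_ofReal (by linarith), smul_eq_mul, mul_comm]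
  have hIS : ∀ j : ℕ, (∫ x in s (j+1), g x) = β (n + j + 1) * 2 ^ (-(n:ℤ) - (j:ℤ) - 1) := by
    intro j
    have e1 : (-(↑(n + j + 1)) : ℤ) = -(n:ℤ) - (j:ℤ) - 1 := by push_cast; ring
    have e2 : (-(↑(n + j + 1)) : ℤ) + 1 = -(n:ℤ) - (j:ℤ) := by push_cast; ring
    have hsub : s (j+1) ⊆ Ioc ((2:ℝ) ^ (-(↑(n+j+1)):ℤ)) ((2:ℝ) ^ ((-(↑(n+j+1)):ℤ) + 1)) := by
      rw [hsS j, e2, e1]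
    rw [setIntegral_congr_fun (hmeas (j+1)) (fun x hx => hg_step (n+j+1) (by omega) x (hsub hx))]
    rw [setIntegral_const, hsS j]
    rw [measureReal_def, Real.volume_Ioc, smul_eq_mul]
    have hpow2 : (2:ℝ) ^ (-(n:ℤ) - (j:ℤ)) = 2 ^ (-(n:ℤ) - (j:ℤ) - 1) * 2 := by
      rw [← zpow_add_one₀ (by norm_num : (2:ℝ) ≠ 0)]; ring_nf
    have hp1 : (0:ℝ) < 2 ^ (-(n:ℤ) - (j:ℤ) - 1) := by positivity
    rw [ENNReal.toReal_ofReal (by rw [hpow2]; linarith), hpow2]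
    ring
  -- β growth
  have hβ' : ∀ j : ℕ, β (n + j) ≤ β n + Q * j := by
    intro j
    induction j with
    | zero => simp
    | succ k ih =>
      have h1 := hβ (n + k) (by omega)
      push_cast
      calc β (n + (k + 1)) = β (n + k + 1) := by ring_nf
        _ ≤ Q + β (n + k) := h1
        _ ≤ Q + (β n + Q * k) := by linarith
        _ = β n + Q * (k + 1) := by ring
  -- the dominating sequence
  set b : ℕ → ℝ := fun j => if j = 0 then β n * (t - 2 ^ (-(n:ℤ)))
      else (β n + Q * j) * (2 ^ (-(n:ℤ)) * (2⁻¹) ^ j) with hb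
  have hbS : ∀ j : ℕ, b (j + 1) = (β n + Q * (j + 1)) * (2 ^ (-(n:ℤ)) * (2⁻¹) ^ (j + 1)) := by
    intro j
    simp only [hb, if_neg (Nat.succ_ne_zero j)]
    push_cast
    ring
  have hpowsplit : ∀ j : ℕ, (2:ℝ) ^ (-(n:ℤ) - (j:ℤ) - 1) = 2 ^ (-(n:ℤ)) * (2⁻¹) ^ (j + 1) := by
    intro j
    rw [show (-(n:ℤ) - (j:ℤ) - 1) = -(n:ℤ) + (-(↑(j+1):ℤ)) by push_cast; ring,
      zpow_add₀ (by norm_num : (2:ℝ) ≠ 0)]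
    congr 1
    exact hz (j + 1)
  have hIle : ∀ j : ℕ, (∫ x in s j, g x) ≤ b j := by
    intro j
    cases j with
    | zero => rw [hI0]; simp [hb]
    | succ k =>
      rw [hIS k, hbS k, hpowsplit k]
      apply mul_le_mul_of_nonneg_right _ (by positivity)
      have h := hβ' (k + 1)
      rw [← Nat.add_assoc] at h
      push_cast at h ⊢
      linarith
  -- summability of b
  have hgeo : Summable (fun j : ℕ => ((2:ℝ)⁻¹) ^ j) :=
    summable_geometric_of_lt_one (by norm_num) (by norm_num)
  have hgeo' : Summable (fun j : ℕ => ((2:ℝ)⁻¹) ^ (j + 1)) :=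
    (summable_nat_add_iff 1).2 hgeo
  have hkgeo : Summable (fun j : ℕ => ((j:ℝ) + 1) * (2⁻¹) ^ (j + 1)) := by
    have h1 : Summable (fun j : ℕ => (j:ℝ) * (2⁻¹) ^ j) := by
      have : (fun k : ℕ => (k:ℝ) * (2:ℝ) ^ (-(k:ℤ))) = fun k : ℕ => (k:ℝ) * (2⁻¹) ^ k := by
        funext k; rw [hz]
      rw [← this]
      exact hSsum
    have h2 := (summable_nat_add_iff 1).2 h1
    simpa using h2
  have hbsum1 : Summable (fun j : ℕ => b (j + 1)) := by
    have : (fun j : ℕ => b (j + 1)) = fun j : ℕ =>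
        (β n * 2 ^ (-(n:ℤ)) * 2⁻¹) * (2⁻¹) ^ j
          + (Q * 2 ^ (-(n:ℤ))) * (((j:ℝ) + 1) * (2⁻¹) ^ (j + 1)) := by
      funext j
      rw [hbS]
      ring
    rw [this]
    exact (hgeo.mul_left _).add (hkgeo.mul_left _)
  have hbsum : Summable b := (summable_nat_add_iff 1).1 hbsum1
  -- tsum of b
  have hT1 : ∑' j : ℕ, ((2:ℝ)⁻¹) ^ (j + 1) = 1 := by
    have : (fun j : ℕ => ((2:ℝ)⁻¹) ^ (j + 1)) = fun j : ℕ => ((2:ℝ)⁻¹) ^ j * 2⁻¹ := by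
      funext j; rw [pow_succ]
    rw [this, tsum_mul_right, tsum_geometric_of_lt_one (by norm_num) (by norm_num)]
    norm_num
  have hT2 : ∑' j : ℕ, ((j:ℝ) + 1) * (2⁻¹) ^ (j + 1) = S := by
    rw [hSdef, Summable.tsum_eq_zero_add hSsum]
    simp only [Nat.cast_zero, zero_mul, zero_add]
    apply tsum_congr
    intro j
    rw [hz]
    push_cast
    ring
  have htsumb : ∑' j, b j = β n * t + Q * 2 ^ (-(n:ℤ)) * S := by
    rw [Summable.tsum_eq_zero_add hbsum]
    have h1 : ∑' j : ℕ, b (j + 1)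
        = (β n * 2 ^ (-(n:ℤ))) * ∑' j : ℕ, ((2:ℝ)⁻¹) ^ (j + 1)
          + (Q * 2 ^ (-(n:ℤ))) * ∑' j : ℕ, ((j:ℝ) + 1) * (2⁻¹) ^ (j + 1) := by
      calc ∑' j : ℕ, b (j + 1)
          = ∑' j : ℕ, ((β n * 2 ^ (-(n:ℤ))) * ((2:ℝ)⁻¹) ^ (j + 1)
              + (Q * 2 ^ (-(n:ℤ))) * (((j:ℝ) + 1) * (2⁻¹) ^ (j + 1))) := by
            apply tsum_congr
            intro j
            rw [hbS]
            ring
        _ = _ := by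
            rw [Summable.tsum_add (hgeo'.mul_left _) (hkgeo.mul_left _), tsum_mul_left, tsum_mul_left]
    rw [h1, hT1, hT2]
    simp only [hb, if_pos rfl]
    ring
  -- put it together
  have hInt_le : (∫ x in Ioc (0:ℝ) t, g x) ≤ β n * t + Q * 2 ^ (-(n:ℤ)) * S := by
    rw [← htsumb, ← hHasSum.tsum_eq]
    exact Summable.tsum_le_tsum hIle hHasSum.summable hbsum
  have hgt : g t = β n := hg_step n hn1 t ⟨htl, htu⟩
  have hfinal : (∫ x in Ioc (0:ℝ) t, g x) ≤ β n * t + Q * S * t := by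
    have h2 : Q * 2 ^ (-(n:ℤ)) * S ≤ Q * S * t := by
      have h3 : (2:ℝ) ^ (-(n:ℤ)) ≤ t := htl.le
      have h4 : 0 ≤ Q * S * (t - 2 ^ (-(n:ℤ))) :=
        mul_nonneg (by positivity) (by linarith)
      nlinarith [h4]
    linarith
  rw [hgt]
  rw [div_mul_eq_mul_div, one_mul, div_le_iff₀ ht0]
  calc (∫ x in Ioc (0:ℝ) t, g x) ≤ β n * t + Q * S * t := hfinal
    _ = (β n + Q * S) * t := by ring
end

section
/- Let (b_n)_{n≥0} be a strictly decreasing sequence in (0,1] with b_0 = 1 and b_n → 0, let a_n = b_{n-1} - b_n be the lengths, and let (a*_n) be the non-increasing rearrangement of (a_n) with partial tail sums b*_m = 1 - Σ_{i≤m} a*_i. Then for every n ≥ 1 there exists m ≥ 0 such that α^{-1}·b*_m < b_n < α·b*_m, where α = (1+√5)/2 is the golden ratio. -/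
open Filter Finset Real goldenRatio Topology

/-! Fix `n ≥ 1` and let `m` be the first index with `b*_m < φ b_n`; it exists since `b*_m → 0`.
If `m = 0` then `b*_m = 1 > b_n`. Otherwise `b*_{m-1} ≥ φ b_n`, and if also `b*_m ≤ φ⁻¹ b_n`,
then `a*_{m-1} ≥ (φ - φ⁻¹) b_n = b_n`. So the `m` longest intervals are all at least as long as
`b_n`; such an interval lies inside `(b_n, 1]`, whence `b*_m ≥ b_n > φ⁻¹ b_n`, a contradiction. -/

section IntervalPartition

variable {b : ℕ → ℝ}

theorem hasSum_sub_succ_of_tendsto (hb : Antitone b) {l : ℝ} (hb_lim : Tendsto b atTop (𝓝 l)) :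
    HasSum (fun k ↦ b k - b (k + 1)) (b 0 - l) := by
  refine (hasSum_iff_tendsto_nat_of_nonneg (fun k ↦ sub_nonneg.2 (hb k.le_succ)) _).2 ?_
  simp only [sum_range_sub']
  exact tendsto_const_nhds.sub hb_lim

theorem exists_sub_sum_lt (hb : Antitone b) (hb_lim : Tendsto b atTop (𝓝 0)) (e : ℕ ≃ ℕ)
    {c : ℝ} (hc : 0 < c) : ∃ m, b 0 - ∑ i ∈ range m, (b (e i) - b (e i + 1)) < c := by
  have hsum := e.hasSum_iff.2 (hasSum_sub_succ_of_tendsto hb hb_lim)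
  have hlim := tendsto_const_nhds (x := b 0) |>.sub hsum.tendsto_sum_nat
  rw [sub_zero, sub_self] at hlim
  exact (hlim.eventually_lt_const hc).exists

theorem lt_of_le_sub_succ (hb : Antitone b) (hb_pos : ∀ n, 0 < b n) {n k : ℕ}
    (h : b n ≤ b k - b (k + 1)) : k < n := by
  by_contra! hnk
  linarith [hb hnk, hb_pos (k + 1)]

theorem le_sub_sum_of_forall_le (hb : Antitone b) (hb_pos : ∀ n, 0 < b n) (e : ℕ ≃ ℕ)
    {n m : ℕ} (h : ∀ i < m, b n ≤ b (e i) - b (e i + 1)) :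
    b n ≤ b 0 - ∑ i ∈ range m, (b (e i) - b (e i + 1)) := by
  have hsub : (range m).map e.toEmbedding ⊆ range n := by
    intro k hk
    obtain ⟨i, hi, rfl⟩ := mem_map.1 hk
    exact mem_range.2 (lt_of_le_sub_succ hb hb_pos (h i (mem_range.1 hi)))
  have hle := sum_le_sum_of_subset_of_nonneg (f := fun k ↦ b k - b (k + 1)) hsub
    fun k _ _ ↦ sub_nonneg.2 (hb k.le_succ)
  rw [sum_map, sum_range_sub'] at hle
  simp only [Equiv.coe_toEmbedding] at hle
  linarith

end IntervalPartition

theorem goldenRatio_sub_inv : φ - φ⁻¹ = 1 := by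
  rw [inv_goldenRatio, sub_neg_eq_add, goldenRatio_add_goldenConj]

theorem stmt_10 (b : ℕ → ℝ) (hb0 : b 0 = 1) (hb_anti : StrictAnti b)
    (hb_pos : ∀ n, 0 < b n) (hb_lim : Tendsto b atTop (nhds 0))
    (astar : ℕ → ℝ) (e : ℕ ≃ ℕ)
    (hperm : ∀ n, astar n = b (e n) - b (e n + 1))
    (hmono : Antitone astar) :
    ∀ n : ℕ, 1 ≤ n → ∃ m : ℕ,
      ((1 + Real.sqrt 5) / 2)⁻¹ * (1 - ∑ i ∈ Finset.range m, astar i) < b n ∧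
      b n < ((1 + Real.sqrt 5) / 2) * (1 - ∑ i ∈ Finset.range m, astar i) := by
  change ∀ n, 1 ≤ n → ∃ m, φ⁻¹ * _ < b n ∧ b n < φ * _
  intro n hn
  simp_rw [inv_mul_lt_iff₀ goldenRatio_pos]
  have hex : ∃ m, 1 - ∑ i ∈ range m, astar i < φ * b n := by
    simpa only [← hperm, hb0] using exists_sub_sum_lt hb_anti.antitone hb_lim e
      (mul_pos goldenRatio_pos (hb_pos n))
  obtain ⟨m, hm, hmin⟩ : ∃ m, 1 - ∑ i ∈ range m, astar i < φ * b n ∧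
      ∀ k < m, φ * b n ≤ 1 - ∑ i ∈ range k, astar i :=
    ⟨Nat.find hex, Nat.find_spec hex, fun k hk ↦ not_lt.1 (Nat.find_min hex hk)⟩
  refine ⟨m, hm, ?_⟩
  have hbn : b n < 1 := hb0 ▸ hb_anti (by omega : 0 < n)
  rcases m with _ | M
  · simpa using hbn.trans one_lt_goldenRatio
  · by_contra! hle
    rw [← le_inv_mul_iff₀ goldenRatio_pos, sum_range_succ] at hle
    have hgap : φ * b n - φ⁻¹ * b n = b n := by rw [← sub_mul, goldenRatio_sub_inv, one_mul]
    have hlong : b n ≤ astar M := by linarith [hmin M M.lt_succ_self]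
    have hcover := le_sub_sum_of_forall_le hb_anti.antitone hb_pos e (m := M + 1)
      fun i hi ↦ hperm i ▸ hlong.trans (hmono (by omega))
    simp only [← hperm, hb0, sum_range_succ] at hcover
    linarith [mul_lt_of_lt_one_left (hb_pos n) (inv_lt_one_of_one_lt₀ one_lt_goldenRatio)]
end

section
/- For every δ with 1 ≤ δ < (1+√5)/2, there exists an interval partition (b_n) of (0,1] (with monotone rearrangement (b*_m)) and an index n such that for no m ≥ 0 does δ^{-1}·b*_m < b_n < δ·b*_m hold. -/
open Filter

noncomputable def bfun (x B : ℝ) : ℕ → ℝ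
  | 0 => 1
  | 1 => x
  | (m+2) => (x - B) * (1/2 : ℝ)^m

lemma swap01_two (m : ℕ) : (Equiv.swap 0 1) (m+2) = m+2 :=
  Equiv.swap_apply_of_ne_of_ne (by omega) (by omega)

lemma aux (δ x B : ℝ) (hδ0 : 0 < δ)
    (hx0 : 0 < x) (hx1 : x < 1) (hxδ : x < 1/δ)
    (hB0 : 0 < B) (hBx : B < x) (hB1x : 1 - x ≤ B)
    (hc : (x - B)/2 ≤ 1 - x)
    (hkey : δ * (1 - B) < x) :
    ∃ b : ℕ → ℝ, b 0 = 1 ∧ StrictAnti b ∧ (∀ n, 0 < b n) ∧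
      Tendsto b atTop (nhds 0) ∧
      ∃ astar : ℕ → ℝ, ∃ e : ℕ ≃ ℕ,
        (∀ n, astar n = b (e n) - b (e n + 1)) ∧ Antitone astar ∧
        ∃ n : ℕ, 1 ≤ n ∧ ∀ m : ℕ,
          ¬(δ⁻¹ * (1 - ∑ i ∈ Finset.range m, astar i) < b n ∧
            b n < δ * (1 - ∑ i ∈ Finset.range m, astar i)) := by
  have hcpos : 0 < x - B := by linarith
  set b : ℕ → ℝ := bfun x B with hb
  have hb0 : b 0 = 1 := rfl
  have hb1 : b 1 = x := rfl
  have hb2 : ∀ m, b (m+2) = (x - B) * (1/2 : ℝ)^m := fun m => rfl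
  set e : ℕ ≃ ℕ := Equiv.swap 0 1 with he
  set astar : ℕ → ℝ := fun n => b (e n) - b (e n + 1) with hastar
  have has0 : astar 0 = B := by
    simp only [hastar, he, Equiv.swap_apply_left]
    rw [hb1, hb2]; norm_num
  have has1 : astar 1 = 1 - x := by
    simp only [hastar, he, Equiv.swap_apply_right]
    rw [hb0, hb1]
  have has2 : ∀ m, astar (m+2) = (x - B) * (1/2 : ℝ)^(m+1) := by
    intro m
    simp only [hastar, he, swap01_two]
    rw [hb2, hb2, pow_succ]
    ring
  have hsa : StrictAnti b := by
    apply strictAnti_nat_of_succ_lt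
    intro n
    match n with
    | 0 => rw [hb0, hb1]; exact hx1
    | 1 => rw [hb1, hb2]; simpa using by linarith
    | (m+2) =>
        rw [hb2, hb2]
        have h1 : (1/2 : ℝ)^(m+1) < (1/2 : ℝ)^m := by
          rw [pow_succ]
          nlinarith [pow_pos (by norm_num : (0:ℝ) < 1/2) m]
        exact mul_lt_mul_of_pos_left h1 hcpos
  have hpos : ∀ n, 0 < b n := by
    intro n
    match n with
    | 0 => rw [hb0]; norm_num
    | 1 => rw [hb1]; exact hx0
    | (m+2) => rw [hb2]; positivity
  have hasnonneg : ∀ n, 0 ≤ astar n := by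
    intro n
    have : b (e n + 1) < b (e n) := hsa (Nat.lt_succ_self _)
    simp only [hastar]; linarith
  refine ⟨b, hb0, hsa, hpos, ?_, astar, e, fun n => rfl, ?_, 1, le_refl 1, ?_⟩
  · -- Tendsto
    have h1 : Tendsto (fun n : ℕ => (x - B) * (1/2 : ℝ)^n) atTop (nhds 0) := by
      have := (tendsto_pow_atTop_nhds_zero_of_lt_one
        (by norm_num : (0:ℝ) ≤ 1/2) (by norm_num : (1/2 : ℝ) < 1)).const_mul (x - B)
      simpa using this
    have h2 : Tendsto (fun n : ℕ => b (n + 2)) atTop (nhds 0) := by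
      refine h1.congr fun n => ?_
      rw [hb2]
    exact (tendsto_add_atTop_iff_nat 2).mp h2
  · -- Antitone astar
    apply antitone_nat_of_succ_le
    intro n
    match n with
    | 0 => rw [has0, has1]; exact hB1x
    | 1 =>
        rw [has1, has2]
        have : (1/2 : ℝ)^(0+1) = 1/2 := by norm_num
        rw [this]; linarith
    | (m+2) =>
        rw [has2, has2]
        have h1 : (1/2 : ℝ)^(m+1+1) ≤ (1/2 : ℝ)^(m+1) := by
          rw [pow_succ]
          nlinarith [pow_pos (by norm_num : (0:ℝ) < 1/2) (m+1)]
        exact mul_le_mul_of_nonneg_left h1 hcpos.le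
  · -- the main inequality
    intro m
    rintro ⟨h1, h2⟩
    rw [hb1] at h1 h2
    match m with
    | 0 =>
        simp only [Finset.range_zero, Finset.sum_empty, sub_zero, mul_one] at h1
        rw [inv_eq_one_div] at h1
        linarith
    | (k+1) =>
        have hsum : B ≤ ∑ i ∈ Finset.range (k+1), astar i := by
          have := Finset.single_le_sum (f := astar)
            (fun i _ => hasnonneg i) (Finset.mem_range.mpr (Nat.succ_pos k))
          rw [has0] at this
          exact this
        have : δ * (1 - ∑ i ∈ Finset.range (k+1), astar i) ≤ δ * (1 - B) :=
          mul_le_mul_of_nonneg_left (by linarith) hδ0.le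
        linarith

theorem stmt_11 (δ : ℝ) (hδ1 : 1 ≤ δ) (hδ2 : δ < (1 + Real.sqrt 5) / 2) :
    ∃ b : ℕ → ℝ, b 0 = 1 ∧ StrictAnti b ∧ (∀ n, 0 < b n) ∧
      Tendsto b atTop (nhds 0) ∧
      ∃ astar : ℕ → ℝ, ∃ e : ℕ ≃ ℕ,
        (∀ n, astar n = b (e n) - b (e n + 1)) ∧ Antitone astar ∧
        ∃ n : ℕ, 1 ≤ n ∧ ∀ m : ℕ,
          ¬(δ⁻¹ * (1 - ∑ i ∈ Finset.range m, astar i) < b n ∧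
            b n < δ * (1 - ∑ i ∈ Finset.range m, astar i)) := by
  have hδ0 : (0:ℝ) < δ := lt_of_lt_of_le one_pos hδ1
  have h5 : Real.sqrt 5 ^ 2 = 5 := Real.sq_sqrt (by norm_num)
  have h5' : 0 ≤ Real.sqrt 5 := Real.sqrt_nonneg 5
  have hδsq : δ^2 < δ + 1 := by nlinarith
  have hδ1' : (0:ℝ) < δ + 1 := by linarith
  set x : ℝ := (δ/(δ+1) + 1/δ)/2 with hx
  have hx1 : δ/(δ+1) < 1/δ := by
    rw [div_lt_div_iff₀ hδ1' hδ0]; nlinarith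
  have hxgt : δ/(δ+1) < x := by simp only [hx]; linarith
  have hxlt : x < 1/δ := by simp only [hx]; linarith
  have hx0 : 0 < x := lt_trans (div_pos hδ0 hδ1') hxgt
  have hδinv1 : 1/δ ≤ 1 := by rw [div_le_one hδ0]; exact hδ1
  have hxle1 : x < 1 := lt_of_lt_of_le hxlt hδinv1
  have hx34 : x ≤ 3/4 := by
    have h : δ/(δ+1) + 1/δ ≤ 3/2 := by
      rw [div_add_div _ _ (ne_of_gt hδ1') (ne_of_gt hδ0), div_le_iff₀ (by positivity)]
      nlinarith
    simp only [hx]; linarith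
  have hxdle : x/δ ≤ x := div_le_self hx0.le hδ1
  have h2' : 1 - x/δ < x := by
    have h := (div_lt_iff₀ hδ1').mp hxgt
    have hxd : x/δ * δ = x := div_mul_cancel₀ x (ne_of_gt hδ0)
    nlinarith
  set B : ℝ := ((1 - x/δ) + x)/2 with hB
  have hBlo : 1 - x/δ < B := by simp only [hB]; linarith
  have hBx : B < x := by simp only [hB]; linarith
  have hB0 : 0 < B := by
    have : x/δ ≤ x := hxdle
    simp only [hB]; linarith
  have hB1x : 1 - x ≤ B := by linarith
  have hc : (x - B)/2 ≤ 1 - x := by linarith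
  have hkey : δ * (1 - B) < x := by
    have h1 : 1 - B < x/δ := by linarith
    have := mul_lt_mul_of_pos_left h1 hδ0
    rw [mul_div_cancel₀ x (ne_of_gt hδ0)] at this
    exact this
  exact aux δ x B hδ0 hx0 hxle1 hxlt hB0 hBx hB1x hc hkey
end

section
/- Let 0 < d < w < b be real numbers and suppose w·(1/(w-d) + 1/(b-w)) ≥ 4. Then w·[((w-d)/(b-d))·w + ((b-w)/(b-d))·d]^{-1} ≤ 4/3. -/
theorem stmt_12 (d w b : ℝ) (hd : 0 < d) (hdw : d < w) (hwb : w < b)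
    (h : w * (1 / (w - d) + 1 / (b - w)) ≥ 4) :
    w * (((w - d) / (b - d)) * w + ((b - w) / (b - d)) * d)⁻¹ ≤ 4 / 3 := by
  have hx : 0 < w - d := by linarith
  have hy : 0 < b - w := by linarith
  have hbd : 0 < b - d := by linarith
  have h' : w * ((b - w) + (w - d)) ≥ 4 * ((w - d) * (b - w)) := by
    have h1 := h
    rw [ge_iff_le, ← sub_nonneg] at h1
    have h2 : (w * (1 / (w - d) + 1 / (b - w)) - 4) * ((w - d) * (b - w)) ≥ 0 :=
      mul_nonneg h1 (mul_pos hx hy).le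
    have e : (w * (1 / (w - d) + 1 / (b - w)) - 4) * ((w - d) * (b - w))
        = w * ((b - w) + (w - d)) - 4 * ((w - d) * (b - w)) := by
      field_simp
    rw [e] at h2
    linarith
  have heq : ((w - d) / (b - d)) * w + ((b - w) / (b - d)) * d
      = ((w - d) * w + (b - w) * d) / (b - d) := by ring
  have hnum : 0 < (w - d) * w + (b - w) * d := add_pos (mul_pos hx (hd.trans hdw)) (mul_pos hy hd)
  rw [heq, inv_div, ← mul_div_assoc, div_le_div_iff₀ hnum (by norm_num : (0:ℝ) < 3)]
  nlinarith [h', mul_pos hx hy]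
end

section
/- Let ψ : [0,1] → ℝ be a concave non-decreasing function with ψ(0) = 0, and let 0 < d < w < b ≤ 1 satisfy w·(1/(w-d) + 1/(b-w)) ≥ 4. Then the linear interpolation value L(w) := ((w-d)/(b-d))·ψ(b) + ((b-w)/(b-d))·ψ(d) satisfies ψ(w) ≤ (4/3)·L(w). -/
open Set

theorem stmt_13 (ψ : ℝ → ℝ)
    (hconc : ConcaveOn ℝ (Icc (0:ℝ) 1) ψ)
    (hmono : MonotoneOn ψ (Icc (0:ℝ) 1))
    (hψ0 : ψ 0 = 0)
    (d w b : ℝ) (hd : 0 < d) (hdw : d < w) (hwb : w < b) (hb1 : b ≤ 1)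
    (h4 : w * (1 / (w - d) + 1 / (b - w)) ≥ 4) :
    ψ w ≤ (4 / 3) * (((w - d) / (b - d)) * ψ b + ((b - w) / (b - d)) * ψ d) := by
  have hw0 : (0:ℝ) < w := hd.trans hdw
  have hwd : (0:ℝ) < w - d := by linarith
  have hbw : (0:ℝ) < b - w := by linarith
  have hbd : (0:ℝ) < b - d := by linarith
  have h0mem : (0:ℝ) ∈ Icc (0:ℝ) 1 := by constructor <;> norm_num
  have hwmem : w ∈ Icc (0:ℝ) 1 := ⟨hw0.le, by linarith⟩
  have hbmem : b ∈ Icc (0:ℝ) 1 := ⟨by linarith, hb1⟩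
  have hψw0 : 0 ≤ ψ w := by
    have := hmono h0mem hwmem hw0.le; linarith
  have hψbw : ψ w ≤ ψ b := hmono hwmem hbmem hwb.le
  -- concavity: d * ψ w ≤ w * ψ d
  have hkey : d * ψ w ≤ w * ψ d := by
    have h := hconc.2 h0mem hwmem
      (show (0:ℝ) ≤ 1 - d/w by
        have : d/w ≤ 1 := by rw [div_le_one hw0]; linarith
        linarith)
      (show (0:ℝ) ≤ d/w by positivity)
      (by ring)
    rw [hψ0] at h
    simp only [smul_eq_mul] at h
    have hx : (1 - d/w) * 0 + (d/w) * w = d := by field_simp; ring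
    rw [hx] at h
    have : (d/w) * ψ w ≤ ψ d := by linarith
    calc d * ψ w = w * ((d/w) * ψ w) := by field_simp
      _ ≤ w * ψ d := by nlinarith
  -- clear denominators in h4
  have h4' : 4 * ((w - d) * (b - w)) ≤ w * (b - w) + w * (w - d) := by
    have hpos : (0:ℝ) < (w - d) * (b - w) := by positivity
    have heq : w * (1 / (w - d) + 1 / (b - w))
        = (w * (b - w) + w * (w - d)) / ((w - d) * (b - w)) := by
      field_simp
    rw [ge_iff_le, heq, le_div_iff₀ hpos] at h4
    linarith
  have hmain : 3 * (b - d) * ψ w ≤ 4 * ((w - d) * ψ b + (b - w) * ψ d) := by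
    nlinarith [mul_nonneg hbw.le (sub_nonneg.mpr hkey),
      mul_nonneg (mul_nonneg hwd.le hw0.le) (sub_nonneg.mpr hψbw),
      mul_nonneg hψw0 (sub_nonneg.mpr h4')]
  calc ψ w = (3 * (b - d) * ψ w) / (3 * (b - d)) := by field_simp
    _ ≤ (4 * ((w - d) * ψ b + (b - w) * ψ d)) / (3 * (b - d)) := by
        exact div_le_div_of_nonneg_right hmain (by positivity)
    _ = (4 / 3) * (((w - d) / (b - d)) * ψ b + ((b - w) / (b - d)) * ψ d) := by
        field_simp
end

section
/- Let f, g ∈ L¹(0,1] be nonnegative and suppose for every t ∈ (0,1] that ∫₀ᵗ f dλ > ∫₀ᵗ g dλ. Then there exists a strictly decreasing sequence (r_n) in (0,1] with r_1 = 1 and r_n → 0 such that for every n and every t ∈ (r_n, 1], ∫_{r_n}^t f dλ > ∫_{r_n}^t g dλ. -/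
open MeasureTheory Set Filter

theorem stmt_14 (f g : ℝ → ℝ)
    (hf_nonneg : ∀ t ∈ Ioc (0:ℝ) 1, 0 ≤ f t)
    (hg_nonneg : ∀ t ∈ Ioc (0:ℝ) 1, 0 ≤ g t)
    (hf_int : IntegrableOn f (Ioc (0:ℝ) 1) volume)
    (hg_int : IntegrableOn g (Ioc (0:ℝ) 1) volume)
    (h : ∀ t ∈ Ioc (0:ℝ) 1, ∫ s in Ioc (0:ℝ) t, g s < ∫ s in Ioc (0:ℝ) t, f s) :
    ∃ r : ℕ → ℝ, r 0 = 1 ∧ StrictAnti r ∧ (∀ n, r n ∈ Ioc (0:ℝ) 1) ∧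
      Tendsto r atTop (nhds 0) ∧
      ∀ n : ℕ, ∀ t ∈ Ioc (r n) 1,
        ∫ s in Ioc (r n) t, g s < ∫ s in Ioc (r n) t, f s := by
  set D : ℝ → ℝ := fun t => (∫ s in Ioc (0:ℝ) t, f s) - ∫ s in Ioc (0:ℝ) t, g s with hDdef
  have hFc : ContinuousOn (fun t => ∫ s in Ioc (0:ℝ) t, f s) (Icc 0 1) :=
    intervalIntegral.continuousOn_primitive
      ((integrableOn_Icc_iff_integrableOn_Ioc).mpr hf_int)
  have hGc : ContinuousOn (fun t => ∫ s in Ioc (0:ℝ) t, g s) (Icc 0 1) :=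
    intervalIntegral.continuousOn_primitive
      ((integrableOn_Icc_iff_integrableOn_Ioc).mpr hg_int)
  have hDc : ContinuousOn D (Icc 0 1) := hFc.sub hGc
  have hD0 : D 0 = 0 := by simp [hDdef]
  have hDpos : ∀ t ∈ Ioc (0:ℝ) 1, 0 < D t := fun t ht => sub_pos.mpr (h t ht)
  -- additivity of the integral
  have split : ∀ (u : ℝ → ℝ), IntegrableOn u (Ioc (0:ℝ) 1) volume → ∀ a t : ℝ, 0 < a → a ≤ t →
      t ≤ 1 → (∫ s in Ioc (0:ℝ) a, u s) + (∫ s in Ioc a t, u s) = ∫ s in Ioc (0:ℝ) t, u s := by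
    intro u hu a t ha hat ht1
    rw [← Ioc_union_Ioc_eq_Ioc ha.le hat,
      setIntegral_union (Ioc_disjoint_Ioc_of_le le_rfl) measurableSet_Ioc
        (hu.mono_set (Ioc_subset_Ioc le_rfl (hat.trans ht1)))
        (hu.mono_set (Ioc_subset_Ioc ha.le ht1))]
  -- key step
  have key : ∀ b : ℝ, ∃ r : ℝ, 0 < b → b ≤ 1 →
      0 < r ∧ r < b ∧ ∀ t ∈ Ioc r 1, D r < D t := by
    intro b
    by_cases hb : 0 < b ∧ b ≤ 1
    · obtain ⟨hb0, hb1⟩ := hb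
      obtain ⟨x₀, hx₀, hmin⟩ := isCompact_Icc.exists_isMinOn (nonempty_Icc.mpr hb1)
        (hDc.mono (Icc_subset_Icc hb0.le le_rfl))
      have hM : 0 < D x₀ := hDpos x₀ ⟨lt_of_lt_of_le hb0 hx₀.1, hx₀.2⟩
      set m := D x₀ / 2 with hm_def
      have hm : 0 < m := half_pos hM
      set S := Icc (0:ℝ) b ∩ D ⁻¹' (Iic m) with hS
      have hSsub : S ⊆ Icc 0 b := inter_subset_left
      have hScl : IsClosed S :=
        (hDc.mono (Icc_subset_Icc le_rfl hb1)).preimage_isClosed_of_isClosed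
          isClosed_Icc isClosed_Iic
      have hScomp : IsCompact S := isCompact_Icc.of_isClosed_subset hScl hSsub
      have hSne : S.Nonempty := ⟨0, ⟨le_rfl, hb0.le⟩, by simp [hD0, hm.le]⟩
      set r := sSup S with hr_def
      have hrS : r ∈ S := hScomp.sSup_mem hSne
      have hbdd : BddAbove S := hScomp.bddAbove
      -- r > 0
      have hrpos : 0 < r := by
        have hcw : Tendsto D (nhdsWithin 0 (Icc (0:ℝ) 1)) (nhds (D 0)) :=
          hDc 0 ⟨le_rfl, zero_le_one⟩
        have hev : ∀ᶠ x in nhdsWithin 0 (Icc (0:ℝ) 1), D x < m := by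
          apply hcw.eventually_lt_const
          rw [hD0]; exact hm
        have hle : nhdsWithin (0:ℝ) (Ioc 0 b) ≤ nhdsWithin 0 (Icc 0 1) :=
          nhdsWithin_mono _ (fun x hx => ⟨hx.1.le, hx.2.trans hb1⟩)
        haveI : (nhdsWithin (0:ℝ) (Ioc 0 b)).NeBot := by
          apply mem_closure_iff_nhdsWithin_neBot.mp
          rw [closure_Ioc hb0.ne]
          exact ⟨le_rfl, hb0.le⟩
        obtain ⟨t, ht1, ht2⟩ := ((hev.filter_mono hle).and eventually_mem_nhdsWithin).exists
        calc (0:ℝ) < t := ht2.1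
          _ ≤ r := le_csSup hbdd ⟨⟨ht2.1.le, ht2.2⟩, ht1.le⟩
      have hbD : m < D b := by
        have := hmin ⟨le_rfl, hb1⟩
        calc m < D x₀ := half_lt_self hM
          _ ≤ D b := this
      have hrltb : r < b := lt_of_le_of_ne (hSsub hrS).2 (by
        intro hrb
        have : D r ≤ m := hrS.2
        rw [hrb] at this
        exact absurd this (not_le.mpr hbD))
      refine ⟨r, fun _ _ => ⟨hrpos, hrltb, fun t ht => ?_⟩⟩
      have hDr : D r ≤ m := hrS.2
      rcases le_or_gt t b with htb | htb
      · have htS : t ∉ S := fun hmem => absurd (le_csSup hbdd hmem) (not_le.mpr ht.1)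
        have : m < D t := by
          by_contra hc
          exact htS ⟨⟨(hrpos.trans ht.1).le, htb⟩, not_lt.mp hc⟩
        linarith [hm_def]
      · have hxt : D x₀ ≤ D t := hmin ⟨htb.le, ht.2⟩
        have h2 : D r < D x₀ := lt_of_le_of_lt hDr (by rw [hm_def]; exact half_lt_self hM)
        exact h2.trans_le hxt
    · exact ⟨0, fun h1 h2 => absurd ⟨h1, h2⟩ hb⟩
  choose φ hφ using key
  set r : ℕ → ℝ := fun n => Nat.rec (1:ℝ) (fun n rn => φ (min rn ((n+1:ℝ)⁻¹))) n with hr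
  have hr0 : r 0 = 1 := rfl
  have hrsucc : ∀ n : ℕ, r (n+1) = φ (min (r n) ((n+1:ℝ)⁻¹)) := fun n => rfl
  have hmem : ∀ n, r n ∈ Ioc (0:ℝ) 1 := by
    intro n
    induction n with
    | zero => exact ⟨one_pos, le_refl 1⟩
    | succ n ih =>
        have hb0 : 0 < min (r n) ((n+1:ℝ)⁻¹) :=
          lt_min ih.1 (by positivity)
        have hb1 : min (r n) ((n+1:ℝ)⁻¹) ≤ 1 := (min_le_left _ _).trans ih.2
        obtain ⟨h1, h2, _⟩ := hφ _ hb0 hb1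
        exact ⟨h1, le_of_lt (h2.trans_le hb1)⟩
  have hstep : ∀ n : ℕ, 0 < r (n+1) ∧ r (n+1) < min (r n) ((n+1:ℝ)⁻¹) ∧
      ∀ t ∈ Ioc (r (n+1)) 1, D (r (n+1)) < D t := by
    intro n
    have hb0 : 0 < min (r n) ((n+1:ℝ)⁻¹) := lt_min (hmem n).1 (by positivity)
    have hb1 : min (r n) ((n+1:ℝ)⁻¹) ≤ 1 := (min_le_left _ _).trans (hmem n).2
    exact hφ _ hb0 hb1
  have hanti : StrictAnti r := strictAnti_nat_of_succ_lt fun n =>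
    ((hstep n).2.1).trans_le (min_le_left _ _)
  have htend : Tendsto r atTop (nhds 0) := by
    rw [← tendsto_add_atTop_iff_nat 1]
    apply squeeze_zero (fun n => (hmem (n+1)).1.le)
      (fun n => ((hstep n).2.1.trans_le (min_le_right _ _)).le)
    have h1 : Tendsto (fun n : ℕ => ((n:ℝ)+1)⁻¹) atTop (nhds 0) := by
      have := tendsto_one_div_add_atTop_nhds_zero_nat (𝕜 := ℝ)
      simpa [one_div] using this
    exact h1
  refine ⟨r, hr0, hanti, hmem, htend, ?_⟩
  intro n t ht
  cases n with
  | zero =>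
      exact absurd ht.1 (by rw [hr0]; exact not_lt.mpr ht.2)
  | succ n =>
      have hD : D (r (n+1)) < D t := (hstep n).2.2 t ht
      have hrm := hmem (n+1)
      have hsf := split f hf_int (r (n+1)) t hrm.1 ht.1.le ht.2
      have hsg := split g hg_int (r (n+1)) t hrm.1 ht.1.le ht.2
      simp only [hDdef] at hD
      linarith
end

section
/- Let f be non-increasing, nonnegative and integrable on (0,1], let (b_n) be an interval partition with b_0 = 1, b_n strictly decreasing to 0, and suppose there is Q > 1 with f**(b_n) ≤ Q·f(b_n) for all n, where f**(t) = (1/t)∫₀ᵗ f dλ. Then the conditional expectation E(f|B)(t) = (1/(b_{n-1}-b_n))∫_{b_n}^{b_{n-1}} f dλ for t ∈ (b_n, b_{n-1}] satisfies E(f|B)(t) ≤ 2Q·f(t) for all t ∈ (0,1]. -/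
open MeasureTheory Set Filter

theorem stmt_15 (f : ℝ → ℝ) (b : ℕ → ℝ) (Q : ℝ)
    (hf_nonneg : ∀ t ∈ Ioc (0:ℝ) 1, 0 ≤ f t)
    (hf_anti : AntitoneOn f (Ioc (0:ℝ) 1))
    (hf_int : IntegrableOn f (Ioc (0:ℝ) 1) volume)
    (hb0 : b 0 = 1) (hb_anti : StrictAnti b) (hb_pos : ∀ n, 0 < b n)
    (hb_lim : Tendsto b atTop (nhds 0))
    (hQ : 1 < Q)
    (hreg : ∀ n : ℕ, (1 / b n) * ∫ s in Ioc (0:ℝ) (b n), f s ≤ Q * f (b n)) :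
    ∀ n : ℕ, ∀ t ∈ Ioc (b (n + 1)) (b n),
      (1 / (b n - b (n + 1))) * ∫ s in Ioc (b (n + 1)) (b n), f s ≤ 2 * Q * f t := by
  intro n t ht
  set a := b (n + 1) with ha_def
  set c := b n with hc_def
  have ha_pos : 0 < a := hb_pos _
  have hac : a < c := hb_anti (Nat.lt_succ_self n)
  have hc1 : c ≤ 1 := by
    rw [← hb0]; exact hb_anti.antitone (Nat.zero_le n)
  have ha1 : a ≤ 1 := le_trans hac.le hc1
  have hsub1 : Ioc (0:ℝ) a ⊆ Ioc 0 1 := Ioc_subset_Ioc le_rfl ha1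
  have hsub2 : Ioc a c ⊆ Ioc (0:ℝ) 1 := Ioc_subset_Ioc ha_pos.le hc1
  have hsub3 : Ioc (0:ℝ) c ⊆ Ioc 0 1 := Ioc_subset_Ioc le_rfl hc1
  have hint1 : IntegrableOn f (Ioc 0 a) volume := hf_int.mono_set hsub1
  have hint2 : IntegrableOn f (Ioc a c) volume := hf_int.mono_set hsub2
  have hint3 : IntegrableOn f (Ioc 0 c) volume := hf_int.mono_set hsub3
  have ht1 : t ∈ Ioc (0:ℝ) 1 := ⟨lt_trans ha_pos ht.1, le_trans ht.2 hc1⟩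
  have hca : (0:ℝ) < c - a := by linarith
  set I2 : ℝ := ∫ s in Ioc a c, f s with hI2
  -- pointwise bound : for s ∈ Ioc 0 a, I2 ≤ (c-a) * f s
  have key : ∀ s ∈ Ioc (0:ℝ) a, I2 ≤ (c - a) * f s := by
    intro s hs
    have hmono : ∀ u ∈ Ioc a c, f u ≤ f s := by
      intro u hu
      exact hf_anti (hsub1 hs) (hsub2 hu) (le_trans hs.2 hu.1.le)
    calc I2 ≤ ∫ _ in Ioc a c, f s := by
            apply setIntegral_mono_on hint2 (integrableOn_const (by simp) (by simp))
              measurableSet_Ioc hmono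
      _ = (c - a) * f s := by
            rw [setIntegral_const]
            rw [Real.volume_real_Ioc_of_le hac.le, smul_eq_mul]
  -- hence f s ≥ I2/(c-a) on Ioc 0 a, so ∫_{Ioc 0 a} f ≥ a * (I2/(c-a))
  have hI1 : a * (I2 / (c - a)) ≤ ∫ s in Ioc (0:ℝ) a, f s := by
    have : ∫ _ in Ioc (0:ℝ) a, (I2 / (c - a)) ≤ ∫ s in Ioc (0:ℝ) a, f s := by
      apply setIntegral_mono_on (integrableOn_const (by simp) (by simp)) hint1
        measurableSet_Ioc
      intro s hs
      have := key s hs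
      rw [div_le_iff₀ hca]
      linarith
    rwa [setIntegral_const, Real.volume_real_Ioc_of_le ha_pos.le, sub_zero,
      smul_eq_mul] at this
  -- split the integral over (0,c]
  have hsplit : (∫ s in Ioc (0:ℝ) c, f s) = (∫ s in Ioc (0:ℝ) a, f s) + I2 := by
    rw [hI2, ← setIntegral_union (Ioc_disjoint_Ioc_of_le le_rfl) measurableSet_Ioc hint1 hint2,
      Ioc_union_Ioc_eq_Ioc ha_pos.le hac.le]
  -- average over (a,c] ≤ average over (0,c]
  have havg : (1 / (c - a)) * I2 ≤ (1 / c) * ∫ s in Ioc (0:ℝ) c, f s := by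
    rw [hsplit]
    have hc_pos : (0:ℝ) < c := hb_pos n
    rw [div_mul_eq_mul_div, div_mul_eq_mul_div, div_le_div_iff₀ hca hc_pos]
    have h1 : a * (I2 / (c - a)) ≤ ∫ s in Ioc (0:ℝ) a, f s := hI1
    have h2 : a * I2 ≤ (c - a) * ∫ s in Ioc (0:ℝ) a, f s := by
      have := mul_le_mul_of_nonneg_left h1 hca.le
      calc a * I2 = (c - a) * (a * (I2 / (c - a))) := by field_simp
        _ ≤ (c - a) * ∫ s in Ioc (0:ℝ) a, f s := this
    nlinarith
  -- conclude
  have hfb : f c ≤ f t := hf_anti ht1 ⟨hb_pos n, hc1⟩ ht.2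
  have hft : 0 ≤ f t := hf_nonneg t ht1
  have hQpos : (0:ℝ) < Q := lt_trans one_pos hQ
  calc (1 / (c - a)) * I2 ≤ (1 / c) * ∫ s in Ioc (0:ℝ) c, f s := havg
    _ ≤ Q * f c := hreg n
    _ ≤ Q * f t := mul_le_mul_of_nonneg_left hfb hQpos.le
    _ ≤ 2 * Q * f t := by nlinarith
end
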